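/- arXiv:1406.0899 — 2 statements merged into one kernel-verified Lean document; each statement's English description precedes it below -/
import Mathlib

section
/- Let q be the concave dual function of a convex problem with optimal value f* = q(λ*). Suppose a sequence {z_k} in C satisfies L(z_{k+1}, λ_k) ≤ q(λ_k) + 2ε for all k, where λ_{k+1} = [λ_k + α g(z_{k+1})]^{[0,λ̄]} and λ̄ ≥ ‖λ*‖_∞. Then for the running average λ°_k = (1/k)∑_{i=1}^k λ_i, it holds that q(λ°_k) ≥ f* − m·λ̄²/(αk) − (α/2)·m·ḡ² − 2ε. -/
/-! Measure progress by the potential `D_k = ∑ⱼ (λ_k j - λ* j)²`. Clamping to the box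
`[0, λ̄]^m` does not increase the distance to `λ* ∈ [0, λ̄]^m`, and `g(z_{k+1})` is a
`2ε`-supergradient of `q` at `λ_k`, so each step gives
`D_{k+1} ≤ D_k - 2α (q(λ*) - 2ε - q(λ_k)) + α² m ḡ²`. Telescoping from `D_1 ≤ m λ̄²` bounds the
average of the `q(λ_i)` from below, and Jensen's inequality for `q`, which is concave as an
infimum of functions affine in `λ`, moves the bound to `q` at the averaged multiplier. -/

open Finset

lemma sq_clamp_sub_le {x y b : ℝ} (hy : y ∈ Set.Icc 0 b) :
    (min (max x 0) b - y) ^ 2 ≤ (x - y) ^ 2 := by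
  obtain ⟨hy0, hyb⟩ := hy
  rcases le_total x 0 with hx | hx
  · rw [max_eq_right hx, min_eq_left (hy0.trans hyb)]
    nlinarith
  · rw [max_eq_left hx]
    rcases le_total x b with hxb | hxb
    · rw [min_eq_left hxb]
    · rw [min_eq_right hxb]
      nlinarith

section ProjectedStep

variable {ι : Type*} [Fintype ι]

lemma sum_sq_clamp_step_sub_le {μ μ' ν s : ι → ℝ} {α b : ℝ}
    (hν : ∀ j, ν j ∈ Set.Icc 0 b) (hμ' : ∀ j, μ' j = min (max (μ j + α * s j) 0) b) :
    ∑ j, (μ' j - ν j) ^ 2 ≤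
      ∑ j, (μ j - ν j) ^ 2 + 2 * α * ∑ j, (μ j - ν j) * s j + α ^ 2 * ∑ j, s j ^ 2 := by
  calc ∑ j, (μ' j - ν j) ^ 2 ≤ ∑ j, (μ j + α * s j - ν j) ^ 2 :=
        sum_le_sum fun j _ => hμ' j ▸ sq_clamp_sub_le (hν j)
    _ = _ := by
        simp only [mul_sum, ← sum_add_distrib]
        exact sum_congr rfl fun j _ => by ring

lemma sum_sq_le_card_mul_sq {s : ι → ℝ} {c : ℝ} (h : ∀ j, |s j| ≤ c) :
    ∑ j, s j ^ 2 ≤ Fintype.card ι * c ^ 2 := by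
  have hsq : ∀ j ∈ univ, s j ^ 2 ≤ c ^ 2 := fun j _ =>
    sq_le_sq' (abs_le.mp (h j)).1 (abs_le.mp (h j)).2
  simpa using sum_le_card_nsmul univ _ _ hsq

end ProjectedStep

lemma sub_le_sum_Icc_of_le_add {D c : ℕ → ℝ} (h : ∀ i ≥ 1, D (i + 1) ≤ D i + c i) (k : ℕ) :
    D (k + 1) - D 1 ≤ ∑ i ∈ Icc 1 k, c i := by
  induction k with
  | zero => simp
  | succ k ih =>
    rw [sum_Icc_succ_top (by omega)]
    linarith [h (k + 1) (by omega)]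

lemma le_average_of_potential_step {D a : ℕ → ℝ} {v α M R : ℝ} (hα : 0 < α)
    (hD : ∀ i, 0 ≤ D i) (hD1 : D 1 ≤ R)
    (hstep : ∀ i ≥ 1, D (i + 1) ≤ D i - 2 * α * (v - a i) + α ^ 2 * M) {k : ℕ} (hk : 1 ≤ k) :
    v - R / (2 * α * k) - α / 2 * M ≤ (k : ℝ)⁻¹ * ∑ i ∈ Icc 1 k, a i := by
  have hk0 : (0 : ℝ) < k := by exact_mod_cast hk
  have htel := sub_le_sum_Icc_of_le_add (D := D) (c := fun i => α ^ 2 * M - 2 * α * (v - a i))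
    (fun i hi => by linarith [hstep i hi]) k
  have hsum : ∑ i ∈ Icc 1 k, (α ^ 2 * M - 2 * α * (v - a i))
      = 2 * α * ∑ i ∈ Icc 1 k, a i - k * (2 * α * v - α ^ 2 * M) := by
    simp only [sum_sub_distrib, ← mul_sum, sum_const, Nat.card_Icc, add_tsub_cancel_right,
      nsmul_eq_mul]
    ring
  rw [hsum] at htel
  have hDk := hD (k + 1)
  rw [← sub_nonneg]
  have hdiff : (k : ℝ)⁻¹ * ∑ i ∈ Icc 1 k, a i - (v - R / (2 * α * k) - α / 2 * M)
      = (2 * α * ∑ i ∈ Icc 1 k, a i - k * (2 * α * v - α ^ 2 * M) + R) / (2 * α * k) := by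
    field_simp
    ring
  rw [hdiff]
  exact div_nonneg (by linarith) (by positivity)

lemma ConcaveOn.le_map_finset_average {E κ : Type*} [AddCommGroup E] [Module ℝ E] {φ : E → ℝ}
    (hφ : ConcaveOn ℝ Set.univ φ) {s : Finset κ} (hs : s.Nonempty) (p : κ → E) :
    (#s : ℝ)⁻¹ * ∑ i ∈ s, φ (p i) ≤ φ ((#s : ℝ)⁻¹ • ∑ i ∈ s, p i) := by
  have h := hφ.le_map_sum (t := s) (w := fun _ => (#s : ℝ)⁻¹) (p := p) (fun _ _ => by positivity)
    (by simp [hs.card_pos.ne']) (fun _ _ => Set.mem_univ _)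
  rwa [← smul_sum, ← smul_sum, smul_eq_mul] at h

section Lagrangian

variable {E ι : Type*} [Fintype ι]

noncomputable def lagrangian (f : E → ℝ) (g : ι → E → ℝ) (μ : EuclideanSpace ℝ ι) (w : E) : ℝ :=
  f w + ∑ j, μ j * g j w

noncomputable def dualFunction (C : Set E) (f : E → ℝ) (g : ι → E → ℝ)
    (μ : EuclideanSpace ℝ ι) : ℝ :=
  sInf (lagrangian f g μ '' C)

variable {C : Set E} {f : E → ℝ} {g : ι → E → ℝ}

lemma lagrangian_sub_lagrangian (μ ν : EuclideanSpace ℝ ι) (w : E) :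
    lagrangian f g μ w - lagrangian f g ν w = ∑ j, (μ j - ν j) * g j w := by
  simp only [lagrangian, sub_mul, sum_sub_distrib]
  ring

lemma lagrangian_add_smul {a b : ℝ} (hab : a + b = 1) (μ ν : EuclideanSpace ℝ ι) (w : E) :
    lagrangian f g (a • μ + b • ν) w = a * lagrangian f g μ w + b * lagrangian f g ν w := by
  simp only [lagrangian, PiLp.add_apply, PiLp.smul_apply, smul_eq_mul, add_mul, mul_assoc,
    sum_add_distrib, ← mul_sum]
  linear_combination (-f w) * hab

lemma le_dualFunction (hC : C.Nonempty) {μ : EuclideanSpace ℝ ι} {c : ℝ}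
    (h : ∀ w ∈ C, c ≤ lagrangian f g μ w) : c ≤ dualFunction C f g μ :=
  le_csInf (hC.image _) (by rintro _ ⟨w, hw, rfl⟩; exact h w hw)

variable [TopologicalSpace E]

lemma dualFunction_le_lagrangian (hC : IsCompact C) (hf : ContinuousOn f C)
    (hg : ∀ j, ContinuousOn (g j) C) (μ : EuclideanSpace ℝ ι) {w : E} (hw : w ∈ C) :
    dualFunction C f g μ ≤ lagrangian f g μ w := by
  have hL : ContinuousOn (lagrangian f g μ) C :=
    hf.add (continuousOn_finsetSum _ fun j _ => continuousOn_const.mul (hg j))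
  exact csInf_le (hC.image_of_continuousOn hL).bddBelow ⟨w, hw, rfl⟩

lemma concaveOn_dualFunction (hC : IsCompact C) (hCne : C.Nonempty) (hf : ContinuousOn f C)
    (hg : ∀ j, ContinuousOn (g j) C) : ConcaveOn ℝ Set.univ (dualFunction C f g) := by
  refine ⟨convex_univ, fun μ _ ν _ a b ha hb hab => le_dualFunction hCne fun w hw => ?_⟩
  rw [lagrangian_add_smul hab, smul_eq_mul, smul_eq_mul]
  gcongr <;> exact dualFunction_le_lagrangian hC hf hg _ hw

lemma sum_sq_sub_le_of_projected_dual_step (hC : IsCompact C) (hf : ContinuousOn f C)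
    (hg : ∀ j, ContinuousOn (g j) C) {μ μ' ν : EuclideanSpace ℝ ι} {w : E} (hw : w ∈ C)
    {α b ε G : ℝ} (hα : 0 ≤ α) (hν : ∀ j, ν j ∈ Set.Icc 0 b)
    (hμ' : ∀ j, μ' j = min (max (μ j + α * g j w) 0) b)
    (hdesc : lagrangian f g μ w ≤ dualFunction C f g μ + ε) (hG : ∀ j, |g j w| ≤ G) :
    ∑ j, (μ' j - ν j) ^ 2 ≤ ∑ j, (μ j - ν j) ^ 2
      - 2 * α * (dualFunction C f g ν - ε - dualFunction C f g μ)
      + α ^ 2 * (Fintype.card ι * G ^ 2) := by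
  have hν_le := dualFunction_le_lagrangian hC hf hg ν hw
  calc _ ≤ _ := sum_sq_clamp_step_sub_le hν hμ'
    _ ≤ ∑ j, (μ j - ν j) ^ 2 + 2 * α * (dualFunction C f g μ + ε - dualFunction C f g ν)
        + α ^ 2 * (Fintype.card ι * G ^ 2) := by
      gcongr
      · rw [← lagrangian_sub_lagrangian]
        linarith
      · exact sum_sq_le_card_mul_sq hG
    _ = _ := by ring

end Lagrangian

theorem dual_average_lower_bound_general {n m : ℕ} (C : Set (EuclideanSpace ℝ (Fin n)))
    (hCc : IsCompact C) (hCne : C.Nonempty)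
    (f : EuclideanSpace ℝ (Fin n) → ℝ)
    (hfc : ContinuousOn f C)
    (g : Fin m → EuclideanSpace ℝ (Fin n) → ℝ)
    (hgc : ∀ j, ContinuousOn (g j) C)
    (q : EuclideanSpace ℝ (Fin m) → ℝ)
    (hq : ∀ lam, q lam = sInf ((fun w => f w + ∑ j, lam j * g j w) '' C))
    (lamstar : EuclideanSpace ℝ (Fin m)) (hlamstar0 : ∀ j, 0 ≤ lamstar j)
    (ε α lambar gbar : ℝ) (hα : 0 < α)
    (hlambar : ∀ j, |lamstar j| ≤ lambar)
    (hgbar : ∀ w ∈ C, ∀ j, |g j w| ≤ gbar)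
    (z : ℕ → EuclideanSpace ℝ (Fin n)) (hzC : ∀ k, z k ∈ C)
    (lam : ℕ → EuclideanSpace ℝ (Fin m))
    (hlam1 : ∀ j, lam 1 j ∈ Set.Icc (0:ℝ) lambar)
    (hupd : ∀ k ≥ 1, ∀ j,
      lam (k + 1) j = min (max (lam k j + α * g j (z (k + 1))) 0) lambar)
    (hdescent : ∀ k ≥ 1,
      f (z (k + 1)) + ∑ j, lam k j * g j (z (k + 1)) ≤ q (lam k) + 2 * ε) :
    ∀ k : ℕ, k ≥ 1 →
      q ((k:ℝ)⁻¹ • ∑ i ∈ Finset.Icc 1 k, lam i)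
        ≥ q lamstar - m * lambar ^ 2 / (α * k) - α / 2 * m * gbar ^ 2 - 2 * ε := by
  intro k hk
  obtain rfl : q = dualFunction C f g := funext hq
  have hlamstar : ∀ j, lamstar j ∈ Set.Icc 0 lambar := fun j =>
    ⟨hlamstar0 j, (abs_le.mp (hlambar j)).2⟩
  have hstep : ∀ i ≥ 1, ∑ j, (lam (i + 1) j - lamstar j) ^ 2 ≤ ∑ j, (lam i j - lamstar j) ^ 2
      - 2 * α * (dualFunction C f g lamstar - 2 * ε - dualFunction C f g (lam i))
      + α ^ 2 * (m * gbar ^ 2) := fun i hi => by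
    simpa only [Fintype.card_fin] using sum_sq_sub_le_of_projected_dual_step hCc hfc hgc
      (hzC (i + 1)) hα.le hlamstar (hupd i hi) (hdescent i hi) (hgbar _ (hzC (i + 1)))
  have hD1 : ∑ j, (lam 1 j - lamstar j) ^ 2 ≤ m * lambar ^ 2 := by
    simpa using sum_sq_le_card_mul_sq (s := fun j => lam 1 j - lamstar j) fun j => by
      simpa [Real.dist_eq] using Real.dist_le_of_mem_Icc (hlam1 j) (hlamstar j)
  have havg := le_average_of_potential_step (D := fun i => ∑ j, (lam i j - lamstar j) ^ 2)
    (a := fun i => dualFunction C f g (lam i)) hα (fun i => sum_nonneg fun j _ => sq_nonneg _)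
    hD1 hstep hk
  have hjensen :=
    (concaveOn_dualFunction hCc hCne hfc hgc).le_map_finset_average (nonempty_Icc.2 hk) lam
  rw [Nat.card_Icc, add_tsub_cancel_right] at hjensen
  have hweaken : m * lambar ^ 2 / (2 * α * k) ≤ m * lambar ^ 2 / (α * k) := by
    gcongr; linarith
  linarith

/-- With the truncated dual update and approximately-minimising primal points, the dual
value at the running average of multipliers satisfies
`q(λ°_k) ≥ f* - m λ̄²/(α k) - (α/2) m ḡ² - 2ε`. -/
theorem dual_average_lower_bound {n m : ℕ} (C : Set (EuclideanSpace ℝ (Fin n)))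
    (hCc : IsCompact C) (hCconv : Convex ℝ C) (hCne : C.Nonempty)
    (f : EuclideanSpace ℝ (Fin n) → ℝ)
    (hf : ConvexOn ℝ C f) (hfc : ContinuousOn f C)
    (g : Fin m → EuclideanSpace ℝ (Fin n) → ℝ)
    (hg : ∀ j, ConvexOn ℝ C (g j)) (hgc : ∀ j, ContinuousOn (g j) C)
    (q : EuclideanSpace ℝ (Fin m) → ℝ)
    (hq : ∀ lam, q lam = sInf ((fun w => f w + ∑ j, lam j * g j w) '' C))
    (lamstar : EuclideanSpace ℝ (Fin m)) (hlamstar0 : ∀ j, 0 ≤ lamstar j)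
    (hlamstar : ∀ lam : EuclideanSpace ℝ (Fin m), (∀ j, 0 ≤ lam j) → q lam ≤ q lamstar)
    (ε α lambar gbar : ℝ) (hε : 0 ≤ ε) (hα : 0 < α)
    (hlambar : ∀ j, |lamstar j| ≤ lambar)
    (hgbar : ∀ w ∈ C, ∀ j, |g j w| ≤ gbar)
    (z : ℕ → EuclideanSpace ℝ (Fin n)) (hzC : ∀ k, z k ∈ C)
    (lam : ℕ → EuclideanSpace ℝ (Fin m))
    (hlam1 : ∀ j, lam 1 j ∈ Set.Icc (0:ℝ) lambar)
    (hupd : ∀ k ≥ 1, ∀ j,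
      lam (k + 1) j = min (max (lam k j + α * g j (z (k + 1))) 0) lambar)
    (hdescent : ∀ k ≥ 1,
      f (z (k + 1)) + ∑ j, lam k j * g j (z (k + 1)) ≤ q (lam k) + 2 * ε) :
    ∀ k : ℕ, k ≥ 1 →
      q ((k:ℝ)⁻¹ • ∑ i ∈ Finset.Icc 1 k, lam i)
        ≥ q lamstar - m * lambar ^ 2 / (α * k) - α / 2 * m * gbar ^ 2 - 2 * ε :=
  dual_average_lower_bound_general C hCc hCne f hfc g hgc q hq lamstar hlamstar0 ε α lambar gbar hα
    hlambar hgbar z hzC lam hlam1 hupd hdescent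
end

section
/- Let F : R^n → R be convex with bounded curvature constant μ_F on C = conv(D), D finite, and let x̄_D = 2 max_{x∈D}‖x‖₂. If z ∈ C and x* ∈ argmin_{x∈D} F((1−β)z + βx) for β ∈ (0,1), then F((1−β)z + βx*) ≤ min_{y∈C} F(y) + ν + β²μ_F x̄_D², where ν = F(z) − min_{y∈C} F(y). -/
/-!
Take a minimiser `y*` of `F` on `C` and, by the minimum principle for the linear map
`⟪sg z, ·⟫` on `C = conv D`, a point `x₀ ∈ D` with `⟪sg z, x₀⟫ ≤ ⟪sg z, y*⟫`. The curvature bound along `δ = β (x₀ - z)` and the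
subgradient inequality at `z` give
`F((1-β)z + βx₀) ≤ F z + β (F y* - F z) + μ_F β² ‖x₀ - z‖²`, and the middle term is `≤ 0`,
while `‖x₀ - z‖ ≤ 2M` because `C` lies in the ball of radius `M`. The greedy choice `x*` is no
worse than `x₀`.
-/

open Set
open scoped RealInnerProductSpace

theorem EuclideanSpace.sum_mul_eq_inner {ι : Type*} [Fintype ι] (u v : EuclideanSpace ℝ ι) :
    ∑ j, u j * v j = ⟪u, v⟫ := by
  simp [PiLp.inner_apply, mul_comm]

section InnerProductSpace

variable {E : Type*} [NormedAddCommGroup E] [InnerProductSpace ℝ E]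

theorem norm_sub_le_two_mul_of_mem_convexHull {s : Set E} {M : ℝ} (hM : ∀ x ∈ s, ‖x‖ ≤ M)
    {x y : E} (hx : x ∈ convexHull ℝ s) (hy : y ∈ convexHull ℝ s) : ‖x - y‖ ≤ 2 * M := by
  have hball : convexHull ℝ s ⊆ Metric.closedBall 0 M :=
    convexHull_min (fun x hx => mem_closedBall_zero_iff.2 (hM x hx)) (convex_closedBall 0 M)
  have hxM := mem_closedBall_zero_iff.1 (hball hx)
  have hyM := mem_closedBall_zero_iff.1 (hball hy)
  linarith [norm_sub_le x y]

theorem exists_inner_le_of_mem_convexHull (g : E) {s : Set E} {y : E}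
    (hy : y ∈ convexHull ℝ s) : ∃ x ∈ s, ⟪g, x⟫ ≤ ⟪g, y⟫ :=
  ((innerSL ℝ g).toLinearMap.concaveOn convex_univ).exists_le_of_mem_convexHull
    (subset_univ s) hy

theorem convexCombination_le_of_curvature {C : Set E} (hC : Convex ℝ C) {F : E → ℝ}
    {g z x : E} {μ β : ℝ} (hz : z ∈ C) (hx : x ∈ C) (hβ : β ∈ Icc (0 : ℝ) 1)
    (hcurv : ∀ δ, z + δ ∈ C → F (z + δ) - F z ≤ ⟪g, δ⟫ + μ * ‖δ‖ ^ 2) :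
    F ((1 - β) • z + β • x) ≤ F z + β * ⟪g, x - z⟫ + μ * β ^ 2 * ‖x - z‖ ^ 2 := by
  have hcomb : z + β • (x - z) = (1 - β) • z + β • x := by
    rw [smul_sub, sub_smul, one_smul]; abel
  have h := hcurv (β • (x - z)) (hC.add_smul_sub_mem hz hx hβ)
  rw [hcomb, inner_smul_right, norm_smul, mul_pow, Real.norm_eq_abs, sq_abs] at h
  linarith

end InnerProductSpace

theorem greedy_step_near_optimal_general {n : ℕ} (D : Set (EuclideanSpace ℝ (Fin n)))
    (F : EuclideanSpace ℝ (Fin n) → ℝ)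
    (sg : EuclideanSpace ℝ (Fin n) → EuclideanSpace ℝ (Fin n))
    (hsg : ∀ w ∈ convexHull ℝ D, ∀ v, F w + ∑ j, sg w j * (v - w) j ≤ F v)
    (μF : ℝ) (hμF : 0 ≤ μF)
    (hcurv : ∀ w δ, w ∈ convexHull ℝ D → w + δ ∈ convexHull ℝ D →
      F (w + δ) - F w ≤ (∑ j, sg w j * δ j) + μF * ‖δ‖ ^ 2)
    (M : ℝ) (hM : IsGreatest ((fun x => ‖x‖) '' D) M)
    (β : ℝ) (hβ : β ∈ Set.Ioo (0:ℝ) 1)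
    (z : EuclideanSpace ℝ (Fin n)) (hz : z ∈ convexHull ℝ D)
    (xstar : EuclideanSpace ℝ (Fin n))
    (hxstar : ∀ x ∈ D, F ((1 - β) • z + β • xstar) ≤ F ((1 - β) • z + β • x))
    (Fmin : ℝ) (hFmin : IsLeast (F '' convexHull ℝ D) Fmin) :
    F ((1 - β) • z + β • xstar) ≤ Fmin + (F z - Fmin) + β ^ 2 * μF * (2 * M) ^ 2 := by
  simp only [EuclideanSpace.sum_mul_eq_inner] at hsg hcurv
  obtain ⟨ystar, hystar, rfl⟩ := hFmin.1
  have hFz : F ystar ≤ F z := hFmin.2 ⟨z, hz, rfl⟩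
  obtain ⟨x₀, hx₀, hgx₀⟩ := exists_inner_le_of_mem_convexHull (sg z) hystar
  have hx₀C := subset_convexHull ℝ D hx₀
  have hgap : ⟪sg z, x₀ - z⟫ ≤ F ystar - F z := by
    have hsub := hsg z hz ystar
    rw [inner_sub_right] at hsub ⊢
    linarith
  have hdist : ‖x₀ - z‖ ≤ 2 * M :=
    norm_sub_le_two_mul_of_mem_convexHull (fun x hx => hM.2 ⟨x, hx, rfl⟩) hx₀C hz
  have hstep := convexCombination_le_of_curvature (convex_convexHull ℝ D) hz hx₀C
    (Ioo_subset_Icc_self hβ) (hcurv z · hz)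
  have hdescent : β * (F ystar - F z) ≤ 0 := mul_nonpos_of_nonneg_of_nonpos hβ.1.le (by linarith)
  calc F ((1 - β) • z + β • xstar) ≤ F ((1 - β) • z + β • x₀) := hxstar x₀ hx₀
    _ ≤ F z + β * ⟪sg z, x₀ - z⟫ + μF * β ^ 2 * ‖x₀ - z‖ ^ 2 := hstep
    _ ≤ F z + β * (F ystar - F z) + μF * β ^ 2 * (2 * M) ^ 2 := by
      gcongr
      exact hβ.1.le
    _ ≤ F ystar + (F z - F ystar) + β ^ 2 * μF * (2 * M) ^ 2 := by linarith

/-- If `x*` minimises `F((1-β)z + βx)` over the finite action set `D`, then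
`F((1-β)z + βx*) ≤ min_{y∈C} F(y) + ν + β² μ_F x̄_D²` where `ν = F(z) - min_{y∈C} F(y)`
and `x̄_D = 2 max_{x∈D} ‖x‖`. -/
theorem greedy_step_near_optimal {n : ℕ} (D : Set (EuclideanSpace ℝ (Fin n)))
    (hD : D.Finite) (hne : D.Nonempty)
    (F : EuclideanSpace ℝ (Fin n) → ℝ)
    (hF : ConvexOn ℝ Set.univ F)
    (sg : EuclideanSpace ℝ (Fin n) → EuclideanSpace ℝ (Fin n))
    (hsg : ∀ w ∈ convexHull ℝ D, ∀ v, F w + ∑ j, sg w j * (v - w) j ≤ F v)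
    (μF : ℝ) (hμF : 0 ≤ μF)
    (hcurv : ∀ w δ, w ∈ convexHull ℝ D → w + δ ∈ convexHull ℝ D →
      F (w + δ) - F w ≤ (∑ j, sg w j * δ j) + μF * ‖δ‖ ^ 2)
    (M : ℝ) (hM : IsGreatest ((fun x => ‖x‖) '' D) M)
    (β : ℝ) (hβ : β ∈ Set.Ioo (0:ℝ) 1)
    (z : EuclideanSpace ℝ (Fin n)) (hz : z ∈ convexHull ℝ D)
    (xstar : EuclideanSpace ℝ (Fin n)) (hxstarD : xstar ∈ D)
    (hxstar : ∀ x ∈ D, F ((1 - β) • z + β • xstar) ≤ F ((1 - β) • z + β • x))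
    (Fmin : ℝ) (hFmin : IsLeast (F '' convexHull ℝ D) Fmin) :
    F ((1 - β) • z + β • xstar) ≤ Fmin + (F z - Fmin) + β ^ 2 * μF * (2 * M) ^ 2 :=
  greedy_step_near_optimal_general D F sg hsg μF hμF hcurv M hM β hβ z hz xstar hxstar Fmin hFmin
end
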